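/- Let a > 0 and define F_a : ℝ³ ∖ {0} → ℝ by F_a(v) = √(|v|⁴ + 16πa|v|²) − |v|² − 8πa + (8πa)²/(2|v|²). Then F_a is integrable on ℝ³ and (1/(2·(2π)³)) · ∫_{ℝ³} F_a(v) dv = (512·√π/15) · a^{5/2}, which equals 4πa · (128/(15√π)) · a^{3/2}. -/

import Mathlib

open MeasureTheory

/-- The Lee–Huang–Yang integrand
`F_a(v) = √(|v|⁴ + 16πa|v|²) − |v|² − 8πa + (8πa)²/(2|v|²)`. -/
noncomputable def LHY (a : ℝ) (v : EuclideanSpace ℝ (Fin 3)) : ℝ :=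
  Real.sqrt (‖v‖ ^ 4 + 16 * Real.pi * a * ‖v‖ ^ 2) - ‖v‖ ^ 2 - 8 * Real.pi * a
    + (8 * Real.pi * a) ^ 2 / (2 * ‖v‖ ^ 2)

open Set Filter Topology Metric


variable {E : Type*} [NormedAddCommGroup E] [InnerProductSpace ℝ E] [Nontrivial E]
  [FiniteDimensional ℝ E] [MeasurableSpace E] [BorelSpace E]

theorem integrable_fun_norm_of_radial (f : ℝ → ℝ) (hfm : Measurable f)
    (hint : IntegrableOn (fun y : ℝ => y ^ (Module.finrank ℝ E - 1) • f y) (Ioi (0:ℝ))) :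
    Integrable (fun x : E => f ‖x‖) (volume : Measure E) := by
  set μ : Measure E := volume
  set n := Module.finrank ℝ E - 1 with hn
  -- step: integrable w.r.t. volumeIoiPow n
  have h1 : Integrable (fun r : Ioi (0:ℝ) => f r.1) (Measure.volumeIoiPow n) := by
    rw [Measure.volumeIoiPow]
    rw [integrable_withDensity_iff_integrable_smul' (by fun_prop)
      (ae_of_all _ fun x => ENNReal.ofReal_lt_top)]
    have := (MeasurableEmbedding.subtype_coe (measurableSet_Ioi (a := (0:ℝ)))).integrableOn_iff_comap
      (f := fun y : ℝ => y ^ n • f y) (μ := volume) (s := Ioi 0) (by rw [Subtype.range_coe])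
    rw [Subtype.coe_preimage_self, integrableOn_univ] at this
    refine (this.mp hint).congr ?_
    refine ae_of_all _ fun x => ?_
    simp only [Function.comp]
    rw [ENNReal.toReal_ofReal (pow_nonneg x.2.out.le n)]
  -- step: integrable on product
  have h2 : Integrable ((fun r : Ioi (0:ℝ) => f r.1) ∘ Prod.snd)
      (μ.toSphere.prod (Measure.volumeIoiPow n)) := by
    have hsm : AEStronglyMeasurable (fun r : Ioi (0:ℝ) => f r.1)
        (Measure.map Prod.snd (μ.toSphere.prod (Measure.volumeIoiPow n))) :=
      (hfm.comp measurable_subtype_coe).aestronglyMeasurable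
    rw [← integrable_map_measure hsm measurable_snd.aemeasurable]
    rw [Measure.map_snd_prod]
    exact h1.smul_measure (measure_ne_top _ _)
  -- step: transfer through the homeomorphism
  have h3 : Integrable (fun x : ({(0:E)}ᶜ : Set E) => f ‖x.1‖) (μ.comap Subtype.val) := by
    have := (μ.measurePreserving_homeomorphUnitSphereProd.integrable_comp_emb
      (Homeomorph.measurableEmbedding _)).mpr h2
    refine this.congr (ae_of_all _ fun x => ?_)
    simp [homeomorphUnitSphereProd, homeomorphSphereProd]
  -- step: conclude
  have h4 := ((MeasurableEmbedding.subtype_coe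
      (measurableSet_singleton (0:E)).compl).integrableOn_iff_comap
      (f := fun x : E => f ‖x‖) (μ := μ) (s := {(0:E)}ᶜ) (by rw [Subtype.range_coe])).mpr ?_
  · have : μ.restrict {(0:E)}ᶜ = μ := restrict_compl_singleton 0
    rwa [IntegrableOn, this] at h4
  · rw [Subtype.coe_preimage_self, integrableOn_univ]
    exact h3


noncomputable def lhyH (b r : ℝ) : ℝ :=
  ((r^2+2*b)^2/5 - 2*b/3*(r^2+2*b)) * Real.sqrt (r^2+2*b) - r^5/5 - b*r^3/3 + b^2*r/2

noncomputable def lhyh (b r : ℝ) : ℝ :=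
  r^3 * Real.sqrt (r^2+2*b) - r^4 - b*r^2 + b^2/2

theorem lhyH_hasDerivAt {b : ℝ} (hb : 0 < b) (r : ℝ) :
    HasDerivAt (lhyH b) (lhyh b r) r := by
  have hu : (0:ℝ) < r^2 + 2*b := by positivity
  have hs : Real.sqrt (r^2+2*b) ≠ 0 := by positivity
  have hs2 : Real.sqrt (r^2+2*b) ^ 2 = r^2 + 2*b := Real.sq_sqrt hu.le
  have h1 : HasDerivAt (fun r : ℝ => r^2 + 2*b) (2*r) r := by
    simpa using ((hasDerivAt_pow 2 r).add_const (2*b))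
  have h2 : HasDerivAt (fun x : ℝ => Real.sqrt (x^2+2*b)) (2*r / (2 * Real.sqrt (r^2+2*b))) r :=
    h1.sqrt hu.ne'
  have h3 : HasDerivAt (fun x : ℝ => (x^2+2*b)^2/5 - 2*b/3*(x^2+2*b))
      ((2*(r^2+2*b)*(2*r))/5 - 2*b/3*(2*r)) r := by
    have := ((h1.pow 2).div_const 5).sub ((h1.const_mul (2*b/3)))
    simpa [Pi.sub_def, mul_comm, mul_assoc, mul_left_comm] using this
  have h4 := h3.mul h2
  have h5 : HasDerivAt (fun x : ℝ => x^5/5 + b*x^3/3 - b^2*x/2)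
      (r^4 + b*r^2 - b^2/2) r := by
    have := (((hasDerivAt_pow 5 r).div_const 5).add (((hasDerivAt_pow 3 r).const_mul b).div_const 3)).sub
      (((hasDerivAt_id r).const_mul (b^2)).div_const 2)
    simp only [Pi.add_def, Pi.sub_def, id] at this
    refine this.congr_deriv ?_
    ring
  have h6 := h4.sub h5
  have heq : (fun x : ℝ => ((x^2+2*b)^2/5 - 2*b/3*(x^2+2*b)) * Real.sqrt (x^2+2*b)
      - (x^5/5 + b*x^3/3 - b^2*x/2)) = lhyH b := by
    funext x; simp only [lhyH]; ring
  simp only [Pi.mul_def, Pi.sub_def] at h6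
  rw [heq] at h6
  refine h6.congr_deriv ?_
  simp only [lhyh]
  have hs2' : Real.sqrt (r^2+2*b) * Real.sqrt (r^2+2*b) = r^2+2*b := Real.mul_self_sqrt hu.le
  field_simp
  linear_combination (30*(2*b*r/3 - r*(r^2+2*b)/5)) * hs2'

theorem lhyh_integrableOn {b : ℝ} (hb : 0 < b) : IntegrableOn (lhyh b) (Ioi (0:ℝ)) := by
  set R : ℝ := 1 + Real.sqrt b with hR
  have hRpos : 0 < R := by positivity
  have hcont : Continuous (lhyh b) := by
    unfold lhyh; fun_prop
  rw [← Ioc_union_Ioi_eq_Ioi hRpos.le]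
  refine IntegrableOn.union (hcont.integrableOn_Ioc) ?_
  have hbase : IntegrableOn (fun x : ℝ => b^3 * x ^ (-2 : ℝ)) (Ioi R) :=
    (integrableOn_Ioi_rpow_of_lt (by norm_num) hRpos).const_mul _
  refine Integrable.mono' hbase (hcont.aestronglyMeasurable.restrict) ?_
  filter_upwards [ae_restrict_mem measurableSet_Ioi] with r hr
  have hr1 : (1:ℝ) ≤ r := by
    have := Real.sqrt_nonneg b; simp only [mem_Ioi, hR] at hr; linarith
  have hrb : b ≤ r^2 := by
    have h1 : Real.sqrt b ≤ r := by simp only [mem_Ioi, hR] at hr; linarith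
    nlinarith [Real.sq_sqrt hb.le, Real.sqrt_nonneg b]
  have hrpos : 0 < r := lt_of_lt_of_le one_pos hr1
  have hu : (0:ℝ) < r^2 + 2*b := by positivity
  have hs2 : Real.sqrt (r^2+2*b) ^ 2 = r^2 + 2*b := Real.sq_sqrt hu.le
  have hsr : r ≤ Real.sqrt (r^2+2*b) := by
    exact Real.le_sqrt_of_sq_le (by nlinarith)
  set D : ℝ := r^3 * Real.sqrt (r^2+2*b) + r^4 + b*r^2 - b^2/2 with hD
  have hDge : r^4 ≤ D := by
    have : r^3 * r ≤ r^3 * Real.sqrt (r^2+2*b) := by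
      apply mul_le_mul_of_nonneg_left hsr (by positivity)
    rw [hD]
    nlinarith [this, mul_le_mul_of_nonneg_right hrb (sq_nonneg r), mul_self_le_mul_self hb.le hrb]
  have hDpos : 0 < D := lt_of_lt_of_le (by positivity) hDge
  have hid : lhyh b r = (b^3*r^2 - b^4/4) / D := by
    rw [eq_div_iff hDpos.ne']
    simp only [lhyh, hD]
    linear_combination (r^6) * hs2
  rw [hid]
  have hnum_pos : 0 < b^3*r^2 - b^4/4 := by
    nlinarith [mul_le_mul_of_nonneg_left hrb (le_of_lt (pow_pos hb 3)), pow_pos hb 4]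
  rw [Real.norm_eq_abs, abs_div, abs_of_pos hnum_pos, abs_of_pos hDpos]
  have h2 : r ^ (-2:ℝ) = 1 / r^2 := by
    rw [Real.rpow_neg hrpos.le, one_div, show ((2:ℝ) = (2:ℕ)) by norm_num, Real.rpow_natCast]
  rw [h2]
  rw [div_le_iff₀ hDpos]
  have : b^3 * (1/r^2) * D ≥ b^3 * (1/r^2) * r^4 := by
    apply mul_le_mul_of_nonneg_left hDge (by positivity)
  have he : b^3*(1/r^2)*r^4 = b^3*r^2 := by
    field_simp
  calc b^3*r^2 - b^4/4 ≤ b^3 * (1/r^2) * r^4 := by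
        rw [he]; nlinarith [pow_pos hb 4]
    _ ≤ b^3 * (1/r^2) * D := this

theorem lhyH_tendsto {b : ℝ} (hb : 0 < b) : Tendsto (lhyH b) atTop (𝓝 0) := by
  set C : ℝ := (128*b^5 + 225/4*b^4 + 45*b^3) / 45 with hC
  have hmain : ∀ᶠ r in atTop, ‖lhyH b r‖ ≤ C / r := by
    filter_upwards [eventually_ge_atTop (1 + 2*Real.sqrt b)] with r hrR
    have hr1 : (1:ℝ) ≤ r := by
      have := Real.sqrt_nonneg b; linarith
    have hrpos : (0:ℝ) < r := lt_of_lt_of_le one_pos hr1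
    have hrb : 4*b ≤ r^2 := by
      have h1 : 2*Real.sqrt b ≤ r := by linarith
      nlinarith [Real.sq_sqrt hb.le, Real.sqrt_nonneg b]
    have hu : (0:ℝ) < r^2 + 2*b := by positivity
    have hs2 : Real.sqrt (r^2+2*b) ^ 2 = r^2 + 2*b := Real.sq_sqrt hu.le
    have hsr : r ≤ Real.sqrt (r^2+2*b) := Real.le_sqrt_of_sq_le (by nlinarith)
    set s : ℝ := Real.sqrt (r^2+2*b) with hs
    set A : ℝ := 3*r^4 + 2*b*r^2 - 8*b^2 with hA
    set B : ℝ := 3*r^5 + 5*b*r^3 - 15/2*b^2*r with hB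
    have hApos : 0 ≤ A := by rw [hA]; nlinarith [sq_nonneg r, mul_le_mul_of_nonneg_right hrb (sq_nonneg r)]
    have hrAB : 3*r^5 ≤ r*A + B := by rw [hA, hB]; nlinarith [mul_le_mul_of_nonneg_right hrb (sq_nonneg r)]
    have hABpos : 0 < r*A + B := lt_of_lt_of_le (by positivity) hrAB
    have hsAB : r*A + B ≤ s*A + B := by nlinarith [mul_le_mul_of_nonneg_right hsr hApos]
    have hsABpos : 0 < s*A + B := lt_of_lt_of_le hABpos hsAB
    have h15 : lhyH b r = (s*A - B)/15 := by
      rw [eq_div_iff (by norm_num : (15:ℝ) ≠ 0)]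
      simp only [lhyH, hA, hB]; ring
    have hP : s*A - B = (128*b^5 - 225/4*b^4*r^2 - 45*b^3*r^4) / (s*A + B) := by
      rw [eq_div_iff hsABpos.ne']
      simp only [hA, hB]
      linear_combination ((3*r^4 + 2*b*r^2 - 8*b^2)^2) * hs2
    rw [h15, hP]
    rw [Real.norm_eq_abs, abs_div, abs_div, abs_of_pos hsABpos, abs_of_pos (by norm_num : (0:ℝ) < 15)]
    rw [div_div]
    rw [div_le_div_iff₀ (by positivity) hrpos]
    have hC45 : C * 45 = 128*b^5 + 225/4*b^4 + 45*b^3 := by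
      rw [hC, div_mul_cancel₀ _ (by norm_num : (45:ℝ) ≠ 0)]
    have hr2 : (1:ℝ) ≤ r^2 := by nlinarith
    have h2 : r^2 ≤ r^4 := by nlinarith [mul_le_mul_of_nonneg_left hr2 (sq_nonneg r)]
    have h0 : (1:ℝ) ≤ r^4 := le_trans hr2 h2
    have habs : |128*b^5 - 225/4*b^4*r^2 - 45*b^3*r^4| ≤ C * 45 * r^4 := by
      have e1 : b^4*r^2 ≤ b^4*r^4 := mul_le_mul_of_nonneg_left h2 (le_of_lt (pow_pos hb 4))
      have e2 : b^5*1 ≤ b^5*r^4 := mul_le_mul_of_nonneg_left h0 (le_of_lt (pow_pos hb 5))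
      have e3 : b^3*1 ≤ b^3*r^4 := mul_le_mul_of_nonneg_left h0 (le_of_lt (pow_pos hb 3))
      have e4 : 0 < b^4*r^2 := by positivity
      have e5 : 0 < b^3*r^4 := by positivity
      have e6 : 0 < b^5 := pow_pos hb 5
      have e7 : 0 < b^5*r^4 := by positivity
      rw [hC45, abs_le]
      constructor
      · linarith [e1, e2, e3, e4, e5, e6, e7]
      · linarith [e1, e2, e3, e4, e5, e6, e7]
    calc |128*b^5 - 225/4*b^4*r^2 - 45*b^3*r^4| * r ≤ (C*45*r^4) * r := by
          apply mul_le_mul_of_nonneg_right habs hrpos.le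
      _ = C * (45 * r^5) := by ring
      _ ≤ C * ((s*A+B)*15) := by
          apply mul_le_mul_of_nonneg_left _ (by positivity)
          calc 45 * r^5 = 15 * (3*r^5) := by ring
            _ ≤ 15 * (r*A+B) := by linarith
            _ ≤ 15 * (s*A+B) := by linarith
            _ = (s*A+B)*15 := by ring
  have hlim : Tendsto (fun r : ℝ => C / r) atTop (𝓝 0) :=
    tendsto_const_nhds.div_atTop tendsto_id
  exact squeeze_zero_norm' hmain hlim

theorem lhyh_integral {b : ℝ} (hb : 0 < b) :
    ∫ r in Ioi (0:ℝ), lhyh b r = 8/15 * b^2 * Real.sqrt (2*b) := by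
  have h := integral_Ioi_of_hasDerivAt_of_tendsto
    (f := lhyH b) (f' := lhyh b) (a := 0) (m := 0)
    (lhyH_hasDerivAt hb 0).continuousAt.continuousWithinAt
    (fun x _ => lhyH_hasDerivAt hb x)
    (lhyh_integrableOn hb) (lhyH_tendsto hb)
  rw [h]
  have h0 : lhyH b 0 = -(8/15) * b^2 * Real.sqrt (2*b) := by
    simp only [lhyH]
    norm_num
    ring
  rw [h0]; ring

/-- **The Lee–Huang–Yang integral** (end of Section 3): `F_a` is integrable on `ℝ³` and
`(1/(2(2π)³)) ∫ F_a = (512√π/15)·a^{5/2} = 4πa·(128/(15√π))·a^{3/2}`. -/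
theorem lhy_integral (a : ℝ) (ha : 0 < a) :
    Integrable (LHY a) ∧
    (1 / (2 * (2 * Real.pi) ^ 3)) * (∫ v : EuclideanSpace ℝ (Fin 3), LHY a v)
      = (512 * Real.sqrt Real.pi / 15) * a ^ ((5 : ℝ) / 2) ∧
    (512 * Real.sqrt Real.pi / 15) * a ^ ((5 : ℝ) / 2)
      = 4 * Real.pi * a * (128 / (15 * Real.sqrt Real.pi)) * a ^ ((3 : ℝ) / 2) := by
  set b : ℝ := 8 * Real.pi * a with hbdef
  have hb : 0 < b := by have := Real.pi_pos; positivity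
  set g : ℝ → ℝ := fun t => Real.sqrt (t ^ 4 + 16 * Real.pi * a * t ^ 2) - t ^ 2 - 8 * Real.pi * a
    + (8 * Real.pi * a) ^ 2 / (2 * t ^ 2) with hg
  have hLHY : LHY a = fun v : EuclideanSpace ℝ (Fin 3) => g ‖v‖ := rfl
  have hdim : Module.finrank ℝ (EuclideanSpace ℝ (Fin 3)) = 3 := by
    simp [finrank_euclideanSpace]
  have hgm : Measurable g := by
    rw [hg]; fun_prop
  have hcongr : ∀ y ∈ Ioi (0:ℝ), y ^ 2 • g y = lhyh b y := by
    intro y hy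
    have hy0 : (0:ℝ) < y := hy
    have hsqrt : Real.sqrt (y ^ 4 + 16 * Real.pi * a * y ^ 2)
        = y * Real.sqrt (y^2 + 2*b) := by
      rw [show y ^ 4 + 16 * Real.pi * a * y ^ 2 = y^2 * (y^2 + 2*b) by rw [hbdef]; ring,
        Real.sqrt_mul (sq_nonneg y), Real.sqrt_sq hy0.le]
    simp only [hg, smul_eq_mul, lhyh, hsqrt]
    field_simp
    ring
  have hint1d : IntegrableOn (fun y : ℝ =>
      y ^ (Module.finrank ℝ (EuclideanSpace ℝ (Fin 3)) - 1) • g y) (Ioi (0:ℝ)) := by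
    rw [hdim]
    exact (lhyh_integrableOn hb).congr_fun (fun y hy => (hcongr y hy).symm) measurableSet_Ioi
  have hInt : Integrable (LHY a) := by
    rw [hLHY]
    exact integrable_fun_norm_of_radial g hgm hint1d
  refine ⟨hInt, ?_, ?_⟩
  · have hval : (∫ v : EuclideanSpace ℝ (Fin 3), LHY a v)
        = 3 • ((volume (Metric.ball (0 : EuclideanSpace ℝ (Fin 3)) 1)).toReal •
          ∫ y in Ioi (0:ℝ), y ^ 2 • g y) := by
      rw [hLHY, integral_fun_norm_addHaar volume g, hdim]
      rfl
    have hball : (volume (Metric.ball (0 : EuclideanSpace ℝ (Fin 3)) 1)).toReal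
        = 4 * Real.pi / 3 := by
      rw [EuclideanSpace.volume_ball]
      simp only [Fintype.card_fin]
      rw [ENNReal.ofReal_one, one_pow, one_mul, ENNReal.toReal_ofReal (by positivity)]
      have hG : Real.Gamma ((3:ℝ)/2 + 1) = 3/4 * Real.sqrt Real.pi := by
        rw [Real.Gamma_add_one (by norm_num), show (3:ℝ)/2 = 1/2 + 1 by norm_num,
          Real.Gamma_add_one (by norm_num), Real.Gamma_one_half_eq]
        ring
      rw [show ((3:ℕ):ℝ)/2 + 1 = (3:ℝ)/2 + 1 by norm_num, hG]
      rw [show Real.sqrt Real.pi ^ 3 = Real.pi * Real.sqrt Real.pi by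
        nlinarith [Real.sq_sqrt Real.pi_pos.le, Real.sqrt_nonneg Real.pi]]
      have hsp : Real.sqrt Real.pi ≠ 0 := by positivity
      field_simp
    have hioi : (∫ y in Ioi (0:ℝ), y ^ 2 • g y) = 8/15 * b^2 * Real.sqrt (2*b) := by
      rw [setIntegral_congr_fun measurableSet_Ioi hcongr]
      exact lhyh_integral hb
    rw [hval, hball, hioi]
    simp only [nsmul_eq_mul, smul_eq_mul]
    have hsqrt2b : Real.sqrt (2*b) = 4 * Real.sqrt Real.pi * Real.sqrt a := by
      rw [hbdef, show 2*(8*Real.pi*a) = 16 * (Real.pi * a) by ring,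
        show (16:ℝ) = 4^2 by norm_num, Real.sqrt_mul (by positivity),
        Real.sqrt_sq (by norm_num), Real.sqrt_mul Real.pi_pos.le]
      ring
    have ha52 : a ^ ((5:ℝ)/2) = a^2 * Real.sqrt a := by
      rw [show (5:ℝ)/2 = 2 + 1/2 by norm_num, Real.rpow_add ha,
        Real.rpow_two, ← Real.sqrt_eq_rpow]
    rw [hsqrt2b, ha52, hbdef]
    have hpi := Real.pi_pos
    field_simp
    ring
  · have ha52 : a ^ ((5:ℝ)/2) = a * a ^ ((3:ℝ)/2) := by
      rw [show (5:ℝ)/2 = 1 + 3/2 by norm_num, Real.rpow_add ha, Real.rpow_one]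
    have hsp : Real.sqrt Real.pi ≠ 0 := by positivity
    have hsq : Real.sqrt Real.pi * Real.sqrt Real.pi = Real.pi := Real.mul_self_sqrt Real.pi_pos.le
    rw [ha52]
    field_simp
    linear_combination 512 * hsq
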